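/- arXiv:1612.01365 — 2 statements merged into one kernel-verified Lean document; each statement's English description precedes it below -/
import Mathlib

section
/- If p : ℝ → ℝ is a polynomial function of degree at most n (i.e., Δ_{y₁}⋯Δ_{y_{n+1}} p(x) = 0 for all x, y₁,…,y_{n+1} ∈ ℝ) and p is bounded on a set of positive Lebesgue measure, then p is an actual polynomial: there exist a₀,…,a_n ∈ ℝ with p(x) = a_n x^n + ⋯ + a₁x + a₀ for all x. -/
/-!
A function all of whose differences of order `n + 1` vanish is bounded on a whole interval as
soon as it is bounded on a set `s` of positive measure: around a Lebesgue density point of `s`,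
every `t` close to it has a step `h` with `t + h, …, t + (n + 1) h ∈ s`, and `Δ_h^{n+1} f (t) = 0`
expresses `f t` through these values. The same identity with a fixed step then propagates the
bound to every bounded set.

For a locally bounded such `f` one argues by induction on the order. The differences
`ψ(y₁, …, yₙ) = Δ_{y₁} ⋯ Δ_{yₙ} f` of order `n` are constant, additive in each `yᵢ`
(`Δ_{a+b} = Δ_a ∘ shift_b + Δ_b`) and locally bounded, hence `ℝ`-linear in each `yᵢ`, so
`ψ(y) = c · n! · y₁ ⋯ yₙ` with `c = ψ(1, …, 1) / n!`. Since `x ↦ xⁿ` has the same differences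
with `c = 1`, all differences of order `n` of `f - c xⁿ` vanish, and the induction hypothesis
applies to it.
-/

open MeasureTheory

def Δ (h : ℝ) (f : ℝ → ℝ) : ℝ → ℝ := fun x => f (x + h) - f x

open Polynomial Set

/-- `IsPolyFunDegreeLT (n + 1) f` says that `f` is a polynomial function of degree at most `n`;
the list `[y₁, …, yₘ]` stands for the operator `Δ_{y₁} ⋯ Δ_{yₘ}`. -/
def IsPolyFunDegreeLT (m : ℕ) (f : ℝ → ℝ) : Prop :=
  ∀ l : List ℝ, l.length = m → l.foldr Δ f = 0

def IsLocallyBounded (f : ℝ → ℝ) : Prop :=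
  ∀ R, ∃ C, ∀ x, |x| ≤ R → |f x| ≤ C

lemma IsLocallyBounded.sub {f g : ℝ → ℝ} (hf : IsLocallyBounded f) (hg : IsLocallyBounded g) :
    IsLocallyBounded (f - g) := by
  intro R
  obtain ⟨C, hC⟩ := hf R
  obtain ⟨D, hD⟩ := hg R
  exact ⟨C + D, fun x hx => (abs_sub _ _).trans (add_le_add (hC x hx) (hD x hx))⟩

lemma Continuous.isLocallyBounded {f : ℝ → ℝ} (hf : Continuous f) : IsLocallyBounded f := by
  intro R
  obtain ⟨C, hC⟩ :=
    (isCompact_closedBall (0 : ℝ) R).exists_bound_of_continuousOn hf.continuousOn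
  exact ⟨C, fun x hx => by simpa using hC x (by simpa using hx)⟩

lemma Δ_add (a b : ℝ) (f : ℝ → ℝ) : Δ (a + b) f = (fun x => Δ a f (x + b)) + Δ b f := by
  funext x
  simp only [Δ, Pi.add_apply, add_assoc, add_comm b a]
  ring

lemma foldr_Δ_add (l : List ℝ) (f g : ℝ → ℝ) :
    l.foldr Δ (f + g) = l.foldr Δ f + l.foldr Δ g := by
  induction l with
  | nil => rfl
  | cons a l ih => funext x; simp only [List.foldr_cons, ih, Δ, Pi.add_apply]; ring

lemma foldr_Δ_sub (l : List ℝ) (f g : ℝ → ℝ) :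
    l.foldr Δ (f - g) = l.foldr Δ f - l.foldr Δ g := by
  induction l with
  | nil => rfl
  | cons a l ih => funext x; simp only [List.foldr_cons, ih, Δ, Pi.sub_apply]; ring

lemma foldr_Δ_smul (l : List ℝ) (c : ℝ) (f : ℝ → ℝ) : l.foldr Δ (c • f) = c • l.foldr Δ f := by
  induction l with
  | nil => rfl
  | cons a l ih =>
    funext x
    simp only [List.foldr_cons, ih, Δ, Pi.smul_apply, smul_eq_mul]
    ring

lemma foldr_Δ_comp_add_right (l : List ℝ) (f : ℝ → ℝ) (b : ℝ) :
    l.foldr Δ (fun x => f (x + b)) = fun x => l.foldr Δ f (x + b) := by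
  induction l with
  | nil => rfl
  | cons a l ih => funext x; simp only [List.foldr_cons, ih, Δ, add_right_comm]

lemma foldr_replicate_Δ (m : ℕ) (h : ℝ) (f : ℝ → ℝ) :
    (List.replicate m h).foldr Δ f = (fwdDiff h)^[m] f := by
  induction m with
  | zero => rfl
  | succ m ih =>
    rw [List.replicate_succ, List.foldr_cons, ih, Function.iterate_succ_apply']
    rfl

lemma abs_foldr_Δ_le {f : ℝ → ℝ} {C R x : ℝ} (l : List ℝ)
    (hf : ∀ z, |z| ≤ R + (l.map abs).sum → |f z| ≤ C) (hx : |x| ≤ R) :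
    |l.foldr Δ f x| ≤ 2 ^ l.length * C := by
  induction l generalizing R x with
  | nil => simpa using hf x (by simpa using hx)
  | cons a l ih =>
    have hf' : ∀ z, |z| ≤ (R + |a|) + (l.map abs).sum → |f z| ≤ C := fun z hz =>
      hf z (by simpa [add_assoc] using hz)
    have h₁ := ih hf' ((abs_add_le x a).trans (by linarith))
    have h₂ := ih hf' (x := x) (by linarith [abs_nonneg a])
    calc |l.foldr Δ f (x + a) - l.foldr Δ f x|
        ≤ |l.foldr Δ f (x + a)| + |l.foldr Δ f x| := abs_sub _ _
      _ ≤ 2 ^ (a :: l).length * C := by rw [List.length_cons, pow_succ]; linarith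

lemma sum_range_choose_succ (m : ℕ) :
    ∑ k ∈ Finset.range m, (m.choose (k + 1) : ℝ) = 2 ^ m - 1 := by
  have := Nat.sum_range_choose m
  rw [Finset.sum_range_succ'] at this
  rw [eq_sub_iff_add_eq]
  exact_mod_cast (by simpa using this)

namespace IsPolyFunDegreeLT

variable {m : ℕ} {f : ℝ → ℝ}

lemma of_forall_Δ (hf : ∀ h, IsPolyFunDegreeLT m (Δ h f)) : IsPolyFunDegreeLT (m + 1) f := by
  intro l hl
  obtain ⟨l', h, rfl⟩ := (List.eq_nil_or_concat l).resolve_left (by rintro rfl; simp at hl)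
  simpa using hf h l' (by simpa using hl)

lemma foldr_apply_eq_apply_zero (hf : IsPolyFunDegreeLT m f) {l : List ℝ}
    (hl : l.length + 1 = m) (x : ℝ) : l.foldr Δ f x = l.foldr Δ f 0 := by
  simpa [Δ, sub_eq_zero] using congrFun (hf (x :: l) (by simpa using hl)) 0

lemma abs_le_of_abs_add_mul_le (hf : IsPolyFunDegreeLT m f) (t h C : ℝ)
    (hC : ∀ k < m, |f (t + (k + 1) * h)| ≤ C) :
    |f t| ≤ (2 ^ m - 1) * C := by
  have h0 := congrFun (hf (List.replicate m h) (by simp)) t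
  rw [foldr_replicate_Δ, fwdDiff_iter_eq_sum_shift, Finset.sum_range_succ'] at h0
  simp only [Int.reduceNeg, Nat.cast_add, Nat.cast_one, nsmul_eq_mul, Pi.zero_apply, zsmul_eq_mul,
    Int.cast_mul, Int.cast_pow, Int.cast_neg, Int.cast_one, Int.cast_natCast,
    Nat.choose_zero_right, Nat.cast_zero, zero_mul, add_zero, tsub_zero, mul_one] at h0
  calc |f t| = |(-1) ^ m * f t| := by simp [abs_mul]
    _ = |∑ k ∈ Finset.range m,
          (-1) ^ (m - (k + 1)) * (m.choose (k + 1) : ℝ) * f (t + (k + 1) * h)| := by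
      rw [eq_neg_of_add_eq_zero_right h0, abs_neg]
    _ ≤ ∑ k ∈ Finset.range m, (m.choose (k + 1) : ℝ) * C := by
      refine (Finset.abs_sum_le_sum_abs _ _).trans (Finset.sum_le_sum fun k hk => ?_)
      simp only [abs_mul, abs_pow, abs_neg, abs_one, one_pow, one_mul, Nat.abs_cast]
      exact mul_le_mul_of_nonneg_left (hC k (Finset.mem_range.1 hk)) (Nat.cast_nonneg _)
    _ = (2 ^ m - 1) * C := by rw [← Finset.sum_mul, sum_range_choose_succ]

lemma abs_le_of_mem_Ioo_sub_add {a b δ C : ℝ} (hf : IsPolyFunDegreeLT m f) (hδ : 0 < δ)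
    (hab : (m + 1) * δ ≤ b - a) (hC : ∀ x ∈ Ioo a b, |f x| ≤ C) :
    ∀ x ∈ Ioo (a - δ) (b + δ), |f x| ≤ 2 ^ m * C := by
  have hmδ : 0 ≤ (m : ℝ) * δ := by positivity
  have hC0 : 0 ≤ C := (abs_nonneg _).trans (hC ((a + b) / 2) ⟨by linarith, by linarith⟩)
  have hC' : C ≤ 2 ^ m * C := le_mul_of_one_le_left hC0 (one_le_pow₀ one_le_two)
  have hstep : ∀ t h : ℝ, (∀ k < m, t + (k + 1) * h ∈ Ioo a b) → |f t| ≤ 2 ^ m * C :=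
    fun t h hmem =>
      (hf.abs_le_of_abs_add_mul_le t h C fun k hk => hC _ (hmem k hk)).trans (by linarith)
  have hk : ∀ k < m, δ ≤ ((k : ℝ) + 1) * δ ∧ ((k : ℝ) + 1) * δ ≤ m * δ := fun k hk =>
    have : (k : ℝ) + 1 ≤ m := by exact_mod_cast hk
    ⟨le_mul_of_one_le_left hδ.le (by linarith [k.cast_nonneg (α := ℝ)]),
      mul_le_mul_of_nonneg_right this hδ.le⟩
  rintro t ⟨ht₁, ht₂⟩
  rcases le_or_gt t a with hta | hta
  · refine hstep t δ fun k hkm => ⟨?_, ?_⟩ <;> linarith [hk k hkm]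
  rcases lt_or_ge t b with htb | htb
  · exact (hC t ⟨hta, htb⟩).trans hC'
  · refine hstep t (-δ) fun k hkm => ⟨?_, ?_⟩ <;> linarith [hk k hkm]

lemma isLocallyBounded_of_Ioo {u v C : ℝ} (hf : IsPolyFunDegreeLT m f) (huv : u < v)
    (hC : ∀ x ∈ Ioo u v, |f x| ≤ C) : IsLocallyBounded f := by
  set δ := (v - u) / (m + 1) with hδ
  have hδ0 : 0 < δ := by positivity
  have hmδ : (m + 1) * δ = v - u := by rw [hδ]; field_simp
  have hgrow : ∀ j : ℕ, ∃ C, ∀ x ∈ Ioo (u - j * δ) (v + j * δ), |f x| ≤ C := by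
    intro j
    induction j with
    | zero => exact ⟨C, by simpa using hC⟩
    | succ j ih =>
      obtain ⟨C', hC'⟩ := ih
      refine ⟨2 ^ m * C', fun x hx => hf.abs_le_of_mem_Ioo_sub_add hδ0 ?_ hC' x ?_⟩
      · nlinarith [j.cast_nonneg (α := ℝ)]
      · simpa [add_mul, sub_sub, add_assoc] using hx
  intro R
  obtain ⟨j, hj⟩ := exists_nat_gt ((R + |u| + |v|) / δ)
  obtain ⟨C', hC'⟩ := hgrow j
  rw [div_lt_iff₀ hδ0] at hj
  refine ⟨C', fun x hx => hC' x ⟨?_, ?_⟩⟩ <;>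
    linarith [abs_le.1 hx, le_abs_self u, neg_abs_le u, le_abs_self v, neg_abs_le v]

end IsPolyFunDegreeLT

lemma taylor_sub_self_mem_degreeLT {m : ℕ} {q : ℝ[X]} (hq : q ∈ degreeLT ℝ (m + 1)) (h : ℝ) :
    taylor h q - q ∈ degreeLT ℝ m := by
  rw [mem_degreeLT] at hq ⊢
  rcases eq_or_ne q 0 with rfl | hq0
  · simp
  have hlt := degree_sub_lt_left (degree_taylor q h) ((taylor_eq_zero _ _).not.2 hq0)
    (leadingCoeff_taylor _ _)
  rw [degree_taylor] at hlt
  have := (Nat.WithBot.add_one_le_of_lt hlt).trans_lt hq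
  push_cast at this
  exact lt_of_add_lt_add_right this

lemma isPolyFunDegreeLT_eval {m : ℕ} {q : ℝ[X]} (hq : q ∈ degreeLT ℝ m) :
    IsPolyFunDegreeLT m fun x => q.eval x := by
  induction m generalizing q with
  | zero =>
    rintro l hl
    rw [List.length_eq_zero_iff.1 hl]
    obtain rfl : q = 0 := by simpa [mem_degreeLT] using hq
    funext x
    simp
  | succ m ih =>
    refine IsPolyFunDegreeLT.of_forall_Δ fun h => ?_
    convert ih (taylor_sub_self_mem_degreeLT hq h) using 1
    funext x
    simp [Δ, taylor_eval]

namespace IsPolyFunDegreeLT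

variable {f : ℝ → ℝ} {l₁ l₂ : List ℝ}

lemma foldr_append_cons_add (hf : IsPolyFunDegreeLT (l₁.length + l₂.length + 2) f) (a b : ℝ) :
    (l₁ ++ (a + b) :: l₂).foldr Δ f 0
      = (l₁ ++ a :: l₂).foldr Δ f 0 + (l₁ ++ b :: l₂).foldr Δ f 0 := by
  have hconst := hf.foldr_apply_eq_apply_zero (l := l₁ ++ a :: l₂) (by simp; omega) b
  simp only [List.foldr_append, List.foldr_cons] at hconst ⊢
  rw [Δ_add, foldr_Δ_add, Pi.add_apply, foldr_Δ_comp_add_right]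
  dsimp only
  rw [zero_add, hconst]

lemma foldr_append_cons_eq_mul (hf : IsPolyFunDegreeLT (l₁.length + l₂.length + 2) f)
    (hb : IsLocallyBounded f) (a : ℝ) :
    (l₁ ++ a :: l₂).foldr Δ f 0 = a * (l₁ ++ 1 :: l₂).foldr Δ f 0 := by
  let φ : ℝ →+ ℝ := AddMonoidHom.mk' (fun a => (l₁ ++ a :: l₂).foldr Δ f 0)
    hf.foldr_append_cons_add
  obtain ⟨C, hC⟩ := hb (((l₁ ++ l₂).map abs).sum + 1)
  have hφ : Continuous φ := by
    refine φ.continuous_of_isBounded_nhds_zero (Metric.closedBall_mem_nhds 0 one_pos)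
      (isBounded_iff_forall_norm_le.2 ⟨2 ^ (l₁ ++ a :: l₂).length * C, ?_⟩)
    rintro _ ⟨a', ha', rfl⟩
    rw [mem_closedBall_zero_iff, Real.norm_eq_abs] at ha'
    rw [Real.norm_eq_abs, show (l₁ ++ a :: l₂).length = (l₁ ++ a' :: l₂).length by simp]
    refine abs_foldr_Δ_le _ (R := 0) (fun z hz => hC z ?_) (by simp)
    simp only [List.map_append, List.map_cons, List.sum_append, List.sum_cons, zero_add] at hz ⊢
    linarith
  have := map_real_smul φ hφ a 1
  rwa [smul_eq_mul, mul_one] at this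

lemma foldr_append_eq_prod_mul (hb : IsLocallyBounded f) (l₂ : List ℝ) :
    ∀ l₁ : List ℝ, IsPolyFunDegreeLT (l₁.length + l₂.length + 1) f →
      (l₁ ++ l₂).foldr Δ f 0 = l₂.prod * (l₁ ++ List.replicate l₂.length 1).foldr Δ f 0 := by
  induction l₂ with
  | nil => simp
  | cons b l₂ ih =>
    intro l₁ hf
    rw [List.append_cons, ih _ (by simpa [add_assoc, add_comm 1] using hf), List.append_assoc,
      List.singleton_append, foldr_append_cons_eq_mul (by simpa [add_assoc] using hf) hb b]
    simp only [List.prod_cons, List.length_cons, List.replicate_succ]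
    ring

lemma foldr_eq_prod_mul {l : List ℝ} (hf : IsPolyFunDegreeLT (l.length + 1) f)
    (hb : IsLocallyBounded f) :
    l.foldr Δ f 0 = l.prod * (List.replicate l.length 1).foldr Δ f 0 :=
  foldr_append_eq_prod_mul hb l [] (by simpa using hf)

end IsPolyFunDegreeLT

lemma foldr_replicate_one_Δ_pow (N : ℕ) :
    (List.replicate N 1).foldr Δ (fun x : ℝ => x ^ N) 0 = N.factorial := by
  rw [foldr_replicate_Δ, fwdDiff_iter_eq_factorial]
  rfl

theorem IsPolyFunDegreeLT.exists_mem_degreeLT {m : ℕ} {f : ℝ → ℝ}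
    (hf : IsPolyFunDegreeLT m f) (hb : IsLocallyBounded f) :
    ∃ q ∈ degreeLT ℝ m, f = fun x => q.eval x := by
  induction m generalizing f with
  | zero => exact ⟨0, zero_mem _, by funext x; simpa using congrFun (hf [] rfl) x⟩
  | succ N ih =>
    set P : ℝ → ℝ := fun x => x ^ N
    set c := (List.replicate N 1).foldr Δ f 0 / N.factorial
    have hXN : X ^ N ∈ degreeLT ℝ (N + 1) :=
      mem_degreeLT.2 (by rw [degree_X_pow]; exact_mod_cast N.lt_succ_self)
    have hP : IsPolyFunDegreeLT (N + 1) P := by simpa [P] using isPolyFunDegreeLT_eval hXN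
    have hPb : IsLocallyBounded P := (continuous_pow N).isLocallyBounded
    have hg : IsPolyFunDegreeLT N (f - c • P) := by
      intro l hl
      funext x
      subst hl
      rw [foldr_Δ_sub, foldr_Δ_smul, Pi.sub_apply, Pi.smul_apply, smul_eq_mul,
        hf.foldr_apply_eq_apply_zero rfl, hP.foldr_apply_eq_apply_zero rfl,
        hf.foldr_eq_prod_mul hb, hP.foldr_eq_prod_mul hPb, foldr_replicate_one_Δ_pow,
        Pi.zero_apply, mul_left_comm, div_mul_cancel₀ _ (by positivity), sub_self]
    obtain ⟨r, hr, hgr⟩ :=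
      ih hg (hb.sub ((continuous_pow N).const_smul c).isLocallyBounded)
    refine ⟨r + C c * X ^ N, add_mem (degreeLT_mono N.le_succ hr) ?_, funext fun x => ?_⟩
    · rw [← smul_eq_C_mul]
      exact Submodule.smul_mem _ c hXN
    · have := congrFun hgr x
      simp only [Pi.sub_apply, Pi.smul_apply, smul_eq_mul, P] at this
      simp only [eval_add, eval_mul, eval_C, eval_pow, eval_X]
      linarith

lemma exists_closedBall_measure_diff_lt {s : Set ℝ} (hs : MeasurableSet s) (h0 : volume s ≠ 0)
    {ε : ℝ} (hε : 0 < ε) :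
    ∃ d r : ℝ, 0 < r ∧ volume (Metric.closedBall d r \ s) < ENNReal.ofReal (ε * r) := by
  obtain ⟨d, hds, hd⟩ := Measure.exists_mem_of_measure_ne_zero_of_ae h0
    (ae_restrict_of_ae
      (Besicovitch.ae_tendsto_measure_inter_div_of_measurableSet volume hs.compl))
  rw [indicator_of_notMem (not_not_intro hds)] at hd
  obtain ⟨r, hr, hr0⟩ := ((hd.eventually (eventually_lt_nhds
    (ENNReal.ofReal_pos.2 (half_pos hε)))).and self_mem_nhdsWithin).exists
  refine ⟨d, r, hr0, ?_⟩
  rw [Real.volume_closedBall, ENNReal.div_lt_iff (.inl (by simpa using hr0))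
    (.inl ENNReal.ofReal_ne_top), ← ENNReal.ofReal_mul (half_pos hε).le] at hr
  rw [sdiff_eq_compl_inter]
  convert hr using 2
  ring

lemma volume_preimage_add_mul_le {a : ℝ} (ha : 1 ≤ a) (t : ℝ) (S : Set ℝ) :
    volume ((fun h => t + a * h) ⁻¹' S) ≤ volume S := calc
  volume ((a * ·) ⁻¹' ((t + ·) ⁻¹' S)) = ENNReal.ofReal |a⁻¹| * volume ((t + ·) ⁻¹' S) :=
      Real.volume_preimage_mul_left (by positivity) ((t + ·) ⁻¹' S)
  _ ≤ 1 * volume S := by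
      rw [measure_preimage_add]
      gcongr
      exact ENNReal.ofReal_le_one.2
        ((abs_of_pos (by positivity)).trans_le (inv_le_one_of_one_le₀ ha))
  _ = volume S := one_mul _

lemma exists_Ioo_forall_exists_add_mul_mem {s : Set ℝ} (hs : MeasurableSet s)
    (h0 : volume s ≠ 0) (m : ℕ) :
    ∃ u v : ℝ, u < v ∧ ∀ t ∈ Ioo u v, ∃ h, ∀ k < m, t + (k + 1) * h ∈ s := by
  obtain ⟨d, r, hr, hds⟩ := exists_closedBall_measure_diff_lt hs h0
    (by positivity : (0 : ℝ) < 1 / (4 * (m + 1) ^ 2))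
  set ρ := r / (2 * (m + 1)) with hρ
  refine ⟨d - r / 2, d + r / 2, by linarith, fun t ht => ?_⟩
  set bad : ℕ → Set ℝ := fun k =>
    (fun h => t + ((k : ℝ) + 1) * h) ⁻¹' (Metric.closedBall d r \ s)
  have hbad : ∀ k : ℕ, volume (bad k) ≤ volume (Metric.closedBall d r \ s) := fun k =>
    volume_preimage_add_mul_le (by linarith [k.cast_nonneg (α := ℝ)]) t _
  have hsmall : volume (⋃ k ∈ Finset.range m, bad k) < volume (Ioo 0 ρ) := calc
    volume (⋃ k ∈ Finset.range m, bad k) ≤ ∑ k ∈ Finset.range m, volume (bad k) :=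
        measure_biUnion_finset_le _ _
    _ ≤ ∑ _k ∈ Finset.range m, volume (Metric.closedBall d r \ s) :=
        Finset.sum_le_sum fun k _ => hbad k
    _ = m * volume (Metric.closedBall d r \ s) := by simp
    _ ≤ m * ENNReal.ofReal (1 / (4 * (m + 1) ^ 2) * r) := by gcongr
    _ = ENNReal.ofReal (m * (1 / (4 * (m + 1) ^ 2) * r)) := by
        rw [ENNReal.ofReal_mul (by positivity : (0 : ℝ) ≤ m), ENNReal.ofReal_natCast]
    _ < ENNReal.ofReal ρ := by
        refine (ENNReal.ofReal_lt_ofReal_iff (by positivity)).2 ?_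
        rw [hρ]
        field_simp
        nlinarith
    _ = volume (Ioo 0 ρ) := by simp [Real.volume_Ioo]
  obtain ⟨h, hhρ, hgood⟩ := not_subset.1 fun hsub => (measure_mono hsub).not_gt hsmall
  simp only [mem_iUnion, Finset.mem_range, not_exists, bad, mem_preimage] at hgood
  refine ⟨h, fun k hk => ?_⟩
  have hkh : ((k : ℝ) + 1) * h ≤ (m + 1) * ρ :=
    mul_le_mul (by exact_mod_cast Nat.succ_le_succ hk.le) hhρ.2.le hhρ.1.le (by positivity)
  have hρr : (m + 1) * ρ = r / 2 := by rw [hρ]; field_simp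
  have hball : t + (k + 1) * h ∈ Metric.closedBall d r := by
    rw [Metric.mem_closedBall, Real.dist_eq, abs_le]
    have : 0 < ((k : ℝ) + 1) * h := mul_pos (by positivity) hhρ.1
    constructor <;> linarith [ht.1, ht.2]
  by_contra hns
  exact hgood k hk ⟨hball, hns⟩

theorem stmt_8 (n : ℕ) (p : ℝ → ℝ)
    (hpoly : ∀ (y : Fin (n + 1) → ℝ) (x : ℝ), ((List.ofFn y).foldr Δ p) x = 0)
    (hreg : ∃ s : Set ℝ, MeasurableSet s ∧ 0 < volume s ∧
      ∃ C : ℝ, ∀ x ∈ s, |p x| ≤ C) :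
    ∃ a : Fin (n + 1) → ℝ, ∀ x : ℝ, p x = ∑ i : Fin (n + 1), a i * x ^ (i : ℕ) := by
  obtain ⟨s, hs, hpos, C, hC⟩ := hreg
  have hp : IsPolyFunDegreeLT (n + 1) p := fun l hl => by
    have := List.ofFn_congr hl l.get
    rw [List.ofFn_get] at this
    exact this ▸ funext (hpoly _)
  obtain ⟨u, v, huv, hgood⟩ := exists_Ioo_forall_exists_add_mul_mem hs hpos.ne' (n + 1)
  have hbdd : ∀ t ∈ Ioo u v, |p t| ≤ (2 ^ (n + 1) - 1) * C := fun t ht =>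
    let ⟨h, hh⟩ := hgood t ht
    hp.abs_le_of_abs_add_mul_le t h C fun k hk => hC _ (hh k hk)
  obtain ⟨q, hq, rfl⟩ := hp.exists_mem_degreeLT (hp.isLocallyBounded_of_Ioo huv hbdd)
  exact ⟨_, eval_eq_sum_degreeLTEquiv hq⟩
end

section
/- If p : ℝ → ℝ is a polynomial function of degree at most n and p is continuous at one point, then p is a real polynomial of degree at most n. -/
open Polynomial

lemma bounded_poly_const (q : ℝ[X]) (B : ℝ) (h : ∀ x : ℝ, |q.eval x| ≤ B) :
    ∀ x : ℝ, q.eval x = q.eval 0 := by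
  have hdeg : q.degree ≤ 0 := by
    rw [← Polynomial.abs_isBoundedUnder_iff]
    exact ⟨B, Filter.eventually_map.mpr (Filter.Eventually.of_forall fun x => h x)⟩
  intro x
  rw [Polynomial.eq_C_of_degree_le_zero hdeg]
  simp

lemma antideriv (a : ℝ) (ha : a ≠ 0) : ∀ (n : ℕ) (s : ℝ[X]), s.degree ≤ n →
    ∃ Q : ℝ[X], Q.degree ≤ (n + 1 : ℕ) ∧ Q.comp (X + C a) - Q = s := by
  intro n
  induction n with
  | zero =>
    intro s hs
    have hs0 : s.degree ≤ 0 := by exact_mod_cast hs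
    have hsC := Polynomial.eq_C_of_degree_le_zero hs0
    refine ⟨C (s.coeff 0 / a) * X, ?_, ?_⟩
    · calc (C (s.coeff 0/a) * X).degree ≤ (C (s.coeff 0/a)).degree + X.degree := degree_mul_le _ _
        _ ≤ 0 + 1 := add_le_add degree_C_le degree_X_le
        _ ≤ (1 : ℕ) := by norm_num
    · rw [mul_comp, C_comp, X_comp]
      nth_rewrite 3 [hsC]
      rw [mul_add, ← C_mul, div_mul_cancel₀ _ ha]
      ring
  | succ n IH =>
    intro s hs
    set m : ℕ := n + 2 with hm
    set b := s.coeff (n + 1) with hb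
    set t : ℝ[X] := C (b / ((m : ℝ) * a)) * X ^ m with ht
    set u : ℝ[X] := (X + C a) ^ m - X ^ m with hu
    have hφt : t.comp (X + C a) - t = C (b / ((m : ℝ) * a)) * u := by
      rw [ht, mul_comp, C_comp, X_pow_comp, hu]; ring
    have hult : u.degree < ((m : ℕ) : WithBot ℕ) := by
      have h1 : ((X + C a) ^ m - X ^ m).degree < (((X : ℝ[X]) + C a) ^ m).degree := by
        apply degree_sub_lt
        · rw [degree_X_pow, degree_pow, degree_X_add_C a]; simp
        · exact pow_ne_zero _ (monic_X_add_C a).ne_zero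
        · rw [leadingCoeff_X_pow, ((monic_X_add_C a).pow m).leadingCoeff]
      rw [degree_pow, degree_X_add_C a] at h1
      rw [← hu] at h1
      simpa using h1
    have hudeg : u.degree ≤ ((n + 1 : ℕ) : WithBot ℕ) := by
      rw [degree_le_iff_coeff_zero]
      intro k hk
      apply coeff_eq_zero_of_degree_lt
      refine lt_of_lt_of_le hult ?_
      exact_mod_cast Nat.succ_le_of_lt (by exact_mod_cast hk)
    have hucoeff : u.coeff (n + 1) = (m : ℝ) * a := by
      rw [hu, coeff_sub, coeff_X_add_C_pow, coeff_X_pow, if_neg (by omega), sub_zero]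
      have h2 : m - (n+1) = 1 := by omega
      have h3 : m.choose (n+1) = m := Nat.choose_succ_self_right (n+1)
      rw [h2, h3, pow_one, mul_comm]
    have hma : (m : ℝ) * a ≠ 0 := mul_ne_zero (by positivity) ha
    have hs' : (s - (t.comp (X + C a) - t)).degree ≤ (n : ℕ) := by
      rw [degree_le_iff_coeff_zero]
      intro k hk
      rw [coeff_sub, hφt, coeff_C_mul]
      rcases eq_or_lt_of_le (Nat.succ_le_of_lt (by exact_mod_cast hk)) with h | h
      · rw [← h, hucoeff, div_mul_cancel₀ _ hma, ← hb, sub_self]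
      · rw [coeff_eq_zero_of_degree_lt (lt_of_le_of_lt hs (by exact_mod_cast h)),
          coeff_eq_zero_of_degree_lt (lt_of_le_of_lt hudeg (by exact_mod_cast h))]
        ring
    obtain ⟨Q', hQ'deg, hQ'⟩ := IH _ hs'
    refine ⟨t + Q', ?_, ?_⟩
    · refine le_trans (degree_add_le _ _) (max_le ?_ ?_)
      · calc t.degree ≤ (C (b / ((m:ℝ)*a))).degree + (X^m : ℝ[X]).degree := degree_mul_le _ _
          _ ≤ 0 + m := add_le_add degree_C_le (degree_X_pow m).le
          _ ≤ ((n + 1 + 1 : ℕ) : WithBot ℕ) := by rw [zero_add, hm]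
      · refine le_trans hQ'deg ?_
        exact_mod_cast WithBot.coe_le_coe.mpr (by omega)
    · rw [add_comp]
      have : t.comp (X + C a) + Q'.comp (X + C a) - (t + Q') =
        (t.comp (X + C a) - t) + (Q'.comp (X + C a) - Q') := by ring
      rw [this, hQ']
      ring

lemma c_zero (c : ℝ → ℝ) (η M' : ℝ)
    (hadd : ∀ a b : ℝ, |a| ≤ η → c (a + b) = c a + c b)
    (hbound : ∀ a : ℝ, |c a| ≤ M') :
    ∀ a : ℝ, |a| ≤ η → c a = 0 := by
  have hmul : ∀ (m : ℕ) (s : ℝ), |s| ≤ η → c (m * s) = m * c s := by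
    intro m
    induction m with
    | zero =>
      intro s hs
      have h0η : |(0:ℝ)| ≤ η := by rw [abs_zero]; exact le_trans (abs_nonneg s) hs
      have h := hadd 0 0 h0η
      rw [add_zero] at h
      have hc0 : c 0 = 0 := by linarith
      rw [Nat.cast_zero, zero_mul, zero_mul, hc0]
    | succ k IH =>
      intro s hs
      have h1 : ((k : ℝ) + 1) * s = s + k * s := by ring
      rw [Nat.cast_succ, h1, hadd s _ hs, IH s hs]
      ring
  intro a ha
  by_contra hca
  have hca' : 0 < |c a| := abs_pos.mpr hca
  obtain ⟨m, hm⟩ := exists_nat_gt (M' / |c a|)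
  have hm' : M' < m * |c a| := by
    rw [div_lt_iff₀ hca'] at hm
    linarith
  have := hbound (m * a)
  rw [hmul m a ha, abs_mul, Nat.abs_cast] at this
  linarith

lemma const_of_loc (r : ℝ → ℝ) (η : ℝ) (hη : 0 < η)
    (h : ∀ a : ℝ, |a| ≤ η → ∀ x : ℝ, r (x + a) = r x) :
    ∀ x : ℝ, r x = r 0 := by
  have key : ∀ (j : ℕ) (t : ℝ), |t| ≤ η → r (j * t) = r 0 := by
    intro j
    induction j with
    | zero => intro t ht; simp
    | succ k IH =>
      intro t ht
      have h1 : ((k:ℝ) + 1) * t = (k:ℝ) * t + t := by ring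
      rw [Nat.cast_succ, h1, h t ht, IH t ht]
  intro x
  obtain ⟨m, hm⟩ := exists_nat_gt (|x| / η)
  have hm0 : 0 < m := by
    by_contra h0
    interval_cases m
    · simp only [Nat.cast_zero] at hm
      have := div_nonneg (abs_nonneg x) hη.le
      linarith
  have ht : |x / m| ≤ η := by
    rw [abs_div, Nat.abs_cast, div_le_iff₀ (by exact_mod_cast hm0)]
    rw [div_lt_iff₀ hη] at hm
    nlinarith
  have := key m (x / m) ht
  rwa [mul_div_cancel₀ _ (by exact_mod_cast hm0.ne' : (m:ℝ) ≠ 0)] at this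

open Polynomial

def MyP (n : ℕ) (p : ℝ → ℝ) : Prop :=
  ∀ (y : Fin n → ℝ) (x : ℝ), ((List.ofFn y).foldr Δ p) x = 0

lemma step_down (n : ℕ) (p : ℝ → ℝ) (h : MyP (n + 1) p) (a : ℝ) : MyP n (Δ a p) := by
  intro y x
  have h2 := h (Fin.snoc y a) x
  rw [List.ofFn_succ'] at h2
  simp only [Fin.snoc_castSucc, Fin.snoc_last] at h2
  rw [List.concat_eq_append, List.foldr_append] at h2
  simpa using h2

lemma key : ∀ (n : ℕ) (p : ℝ → ℝ), MyP (n + 1) p → ∀ (x₀ δ M : ℝ), 0 < δ →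
    (∀ x, |x - x₀| < δ → |p x| ≤ M) →
    ∃ q : ℝ[X], q.degree ≤ (n : ℕ) ∧ ∀ x, p x = q.eval x := by
  intro n
  induction n with
  | zero =>
    intro p hp x₀ δ M hδ hM
    have hconst : ∀ x, p x = p 0 := by
      intro x
      have h := hp (fun _ => x) 0
      simp only [List.ofFn_succ, List.ofFn_zero, List.foldr_cons, List.foldr_nil, Δ] at h
      rw [zero_add] at h
      linarith
    exact ⟨Polynomial.C (p 0), by simpa using Polynomial.degree_C_le,
      fun x => by rw [hconst x]; simp⟩
  | succ n IH =>
    intro p hp x₀ δ M hδ hM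
    have hq : ∀ a : ℝ, |a| ≤ δ / 2 →
        ∃ q : ℝ[X], q.degree ≤ (n : ℕ) ∧ ∀ x, Δ a p x = q.eval x := by
      intro a ha
      refine IH (Δ a p) (step_down _ _ hp a) x₀ (δ/2) (2*M) (by linarith) ?_
      intro x hx
      have h1 : |x + a - x₀| < δ := by
        have := abs_add_le (x - x₀) a
        have h2 : x + a - x₀ = (x - x₀) + a := by ring
        rw [h2]
        linarith [abs_add_le (x - x₀) a]
      calc |Δ a p x| = |p (x + a) - p x| := rfl
        _ ≤ |p (x + a)| + |p x| := abs_sub _ _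
        _ ≤ 2 * M := by linarith [hM _ h1, hM _ (lt_trans hx (by linarith))]
    set a₀ : ℝ := δ / 4 with ha₀
    have ha₀pos : 0 < a₀ := by rw [ha₀]; linarith
    obtain ⟨q₀, hq₀deg, hq₀⟩ := hq a₀ (by rw [abs_of_nonneg ha₀pos.le]; linarith)
    obtain ⟨Q, hQdeg, hQeq⟩ := antideriv a₀ ha₀pos.ne' n q₀ hq₀deg
    set r : ℝ → ℝ := fun x => p x - Q.eval x with hr
    have hper : Function.Periodic r a₀ := by
      intro x
      have h1 : Q.eval (x + a₀) - Q.eval x = q₀.eval x := by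
        have h2 := congrArg (Polynomial.eval x) hQeq
        simpa [Polynomial.eval_comp] using h2
      have h2 : p (x + a₀) - p x = q₀.eval x := hq₀ x
      simp only [hr]
      linarith
    obtain ⟨MQ, hMQ⟩ : ∃ MQ, ∀ x ∈ Set.Icc (x₀ - δ) (x₀ + δ), |Q.eval x| ≤ MQ := by
      obtain ⟨C, hC⟩ := isCompact_Icc.exists_bound_of_continuousOn
        (Q.continuous_aeval.continuousOn : ContinuousOn (fun x : ℝ => Q.eval x) _)
      exact ⟨C, fun x hx => by simpa [Real.norm_eq_abs] using hC x hx⟩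
    have hrbound : ∀ x, |r x| ≤ M + MQ := by
      intro x
      set k : ℤ := ⌊(x - x₀) / a₀⌋ with hk
      set y : ℝ := x - k * a₀ with hy
      have hfl : (k : ℝ) ≤ (x - x₀) / a₀ := Int.floor_le _
      have hfu : (x - x₀) / a₀ < k + 1 := Int.lt_floor_add_one _
      have hy1 : x₀ ≤ y := by
        rw [hy]
        have : (k : ℝ) * a₀ ≤ x - x₀ := by
          rw [← le_div_iff₀ ha₀pos]; exact hfl
        linarith
      have hy2 : y < x₀ + a₀ := by
        rw [hy]
        have : x - x₀ < ((k : ℝ) + 1) * a₀ := by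
          rw [← div_lt_iff₀ ha₀pos]; exact hfu
        linarith
      have hyr : r x = r y := (hper.sub_int_mul_eq k).symm
      have hyb : |y - x₀| < δ := by
        rw [abs_lt]; constructor <;> [linarith; linarith [ha₀pos]]
      have hpy : |p y| ≤ M := hM y hyb
      have hQy : |Q.eval y| ≤ MQ := hMQ y ⟨by linarith, by linarith⟩
      rw [hyr]
      calc |r y| = |p y - Q.eval y| := rfl
        _ ≤ |p y| + |Q.eval y| := abs_sub _ _
        _ ≤ M + MQ := by linarith
    set c : ℝ → ℝ := fun a => r a - r 0 with hcdef
    have hc : ∀ a, |a| ≤ δ / 2 → ∀ x, r (x + a) - r x = c a := by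
      intro a ha
      obtain ⟨qa, hqadeg, hqa⟩ := hq a ha
      set s : ℝ[X] := qa - (Q.comp (X + Polynomial.C a) - Q) with hs
      have hse : ∀ x, s.eval x = r (x + a) - r x := by
        intro x
        have h1 : (Q.comp (X + Polynomial.C a)).eval x = Q.eval (x + a) := by
          simp [Polynomial.eval_comp]
        simp only [hs, Polynomial.eval_sub, h1, hr]
        have := hqa x
        simp only [Δ] at this
        linarith
      have hsb : ∀ x, |s.eval x| ≤ 2 * (M + MQ) := by
        intro x
        rw [hse]
        calc |r (x + a) - r x| ≤ |r (x + a)| + |r x| := abs_sub _ _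
          _ ≤ 2 * (M + MQ) := by linarith [hrbound (x + a), hrbound x]
      have hconst := bounded_poly_const s _ hsb
      intro x
      have h1 := hse x
      have h2 := hse 0
      rw [zero_add] at h2
      rw [hconst x] at h1
      simp only [hcdef]
      linarith
    have haddc : ∀ a b : ℝ, |a| ≤ δ / 2 → c (a + b) = c a + c b := by
      intro a b ha
      have h1 := hc a ha b
      simp only [hcdef] at h1 ⊢
      rw [add_comm a b]
      linarith
    have hcbound : ∀ a, |c a| ≤ 2 * (M + MQ) := by
      intro a
      simp only [hcdef]
      calc |r a - r 0| ≤ |r a| + |r 0| := abs_sub _ _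
        _ ≤ 2 * (M + MQ) := by linarith [hrbound a, hrbound 0]
    have hczero := c_zero c (δ / 2) (2 * (M + MQ)) haddc hcbound
    have hshift : ∀ a : ℝ, |a| ≤ δ / 2 → ∀ x, r (x + a) = r x := by
      intro a ha x
      have h1 := hc a ha x
      rw [hczero a ha] at h1
      linarith
    have hconst := const_of_loc r (δ / 2) (by linarith) hshift
    refine ⟨Q + Polynomial.C (r 0), ?_, ?_⟩
    · refine le_trans (Polynomial.degree_add_le _ _) (max_le hQdeg ?_)
      exact le_trans Polynomial.degree_C_le (by exact_mod_cast Nat.cast_nonneg' (n+1))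
    · intro x
      have h1 := hconst x
      rw [Polynomial.eval_add, Polynomial.eval_C]
      simp only [hr] at h1 ⊢
      linarith

theorem stmt_9 (n : ℕ) (p : ℝ → ℝ)
    (hpoly : ∀ (y : Fin (n + 1) → ℝ) (x : ℝ), ((List.ofFn y).foldr Δ p) x = 0)
    (hcont : ∃ x₀ : ℝ, ContinuousAt p x₀) :
    ∃ q : Polynomial ℝ, q.degree ≤ (n : ℕ) ∧ ∀ x : ℝ, p x = q.eval x := by
  obtain ⟨x₀, hx₀⟩ := hcont
  obtain ⟨δ, hδ, hball⟩ := Metric.continuousAt_iff.mp hx₀ 1 one_pos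
  refine key n p hpoly x₀ δ (|p x₀| + 1) hδ ?_
  intro x hx
  have h1 := hball (show dist x x₀ < δ by rwa [Real.dist_eq])
  rw [Real.dist_eq] at h1
  calc |p x| = |p x₀ + (p x - p x₀)| := by ring_nf
    _ ≤ |p x₀| + |p x - p x₀| := abs_add_le _ _
    _ ≤ |p x₀| + 1 := by linarith
end
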